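/- For every integer r ≥ 3 and every real ε with 0 < ε < 1, if p = n^{-1+ε}, then asymptotically almost surely the random r-uniform hypergraph G^(r)(n,p) contains a tight path on at least n − n^{1−ε/2} vertices. -/
import Mathlib


open scoped Classical

/-- The set of all potential edges of an `r`-uniform hypergraph on vertex set `Fin n`. -/
def allEdges (n r : ℕ) : Finset (Finset (Fin n)) :=
  Finset.powersetCard r (Finset.univ : Finset (Fin n))

/-- The probability that the random `r`-uniform hypergraph `G^(r)(n,p)` (each of the
`C(n,r)` potential edges appearing independently with probability `p`) satisfies `P`. -/
noncomputable def probHyp (n r : ℕ) (p : ℝ) (P : Finset (Finset (Fin n)) → Prop) : ℝ :=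
  ∑ G ∈ (allEdges n r).powerset,
    if P G then p ^ G.card * (1 - p) ^ ((allEdges n r).card - G.card) else 0

/-- The list `P` is a tight path in the `r`-uniform hypergraph with edge set `E`:
its vertices are distinct and every `r` consecutive vertices form an edge. -/
def IsTightPath {α : Type*} [DecidableEq α] (r : ℕ) (E : Finset (Finset α))
    (P : List α) : Prop :=
  P.Nodup ∧ ∀ i, i + r ≤ P.length → ((P.drop i).take r).toFinset ∈ E



theorem sum_w {α : Type*} [DecidableEq α] (s : Finset α) (p : ℝ) :
    ∑ t ∈ s.powerset, p ^ t.card * (1-p) ^ (s.card - t.card) = 1 := by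
  have h := Finset.prod_add (fun _ : α => p) (fun _ => 1 - p) s
  simp only [Finset.prod_const, add_sub_cancel, one_pow] at h
  calc ∑ t ∈ s.powerset, p ^ t.card * (1-p) ^ (s.card - t.card)
      = ∑ t ∈ s.powerset, p ^ t.card * (1-p) ^ (s \ t).card := by
        refine Finset.sum_congr rfl fun t ht => ?_
        rw [Finset.card_sdiff_of_subset (Finset.mem_powerset.mp ht)]
    _ = 1 := h.symm

theorem cylinder {α : Type*} [DecidableEq α] (E A B : Finset α) (p : ℝ)
    (hA : A ⊆ E) (hB : B ⊆ E) (hAB : Disjoint A B) :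
    ∑ G ∈ E.powerset.filter (fun G => A ⊆ G ∧ Disjoint B G),
      p ^ G.card * (1-p) ^ (E.card - G.card) = p ^ A.card * (1-p) ^ B.card := by
  set E' := (E \ A) \ B with hE'
  have hcards : A.card + B.card ≤ E.card := by
    rw [← Finset.card_union_of_disjoint hAB]
    exact Finset.card_le_card (Finset.union_subset hA hB)
  have hE'card : E'.card = E.card - A.card - B.card := by
    rw [hE', Finset.card_sdiff_of_subset, Finset.card_sdiff_of_subset hA]
    intro x hx
    exact Finset.mem_sdiff.mpr ⟨hB hx, fun hxA => hAB.forall_ne_finset hxA hx rfl⟩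
  have key : ∑ G ∈ E.powerset.filter (fun G => A ⊆ G ∧ Disjoint B G),
      p ^ G.card * (1-p) ^ (E.card - G.card)
      = ∑ G' ∈ E'.powerset, p ^ (A.card + G'.card) * (1-p) ^ (E.card - (A.card + G'.card)) := by
    refine Finset.sum_nbij' (fun G => G \ A) (fun G' => G' ∪ A) ?_ ?_ ?_ ?_ ?_
    · intro G hG
      simp only [Finset.mem_filter, Finset.mem_powerset] at hG ⊢
      obtain ⟨hGE, hAG, hBG⟩ := hG
      intro x hx
      rw [Finset.mem_sdiff] at hx
      refine Finset.mem_sdiff.mpr ⟨Finset.mem_sdiff.mpr ⟨hGE hx.1, hx.2⟩, ?_⟩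
      exact fun hxB => hBG.forall_ne_finset hxB hx.1 rfl
    · intro G' hG'
      simp only [Finset.mem_powerset] at hG'
      simp only [Finset.mem_filter, Finset.mem_powerset]
      have h1 : ∀ x ∈ G', x ∈ E ∧ x ∉ A ∧ x ∉ B := by
        intro x hx
        have := hG' hx
        simp only [hE', Finset.mem_sdiff] at this
        exact ⟨this.1.1, this.1.2, this.2⟩
      refine ⟨Finset.union_subset (fun x hx => (h1 x hx).1) hA, Finset.subset_union_right, ?_⟩
      rw [Finset.disjoint_union_right]
      constructor
      · exact Finset.disjoint_left.mpr (fun x hxB hxG => (h1 x hxG).2.2 hxB)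
      · exact hAB.symm
    · intro G hG
      simp only [Finset.mem_filter] at hG
      exact Finset.sdiff_union_of_subset hG.2.1
    · intro G' hG'
      simp only [Finset.mem_powerset] at hG'
      simp only [Finset.union_sdiff_right]
      apply Finset.sdiff_eq_self_iff_disjoint.mpr
      exact Finset.disjoint_left.mpr (fun x hxG hxA => by
        have := hG' hxG
        simp only [hE', Finset.mem_sdiff] at this
        exact this.1.2 hxA)
    · intro G hG
      simp only [Finset.mem_filter] at hG
      have : G.card = A.card + (G \ A).card := by
        rw [Finset.card_sdiff_of_subset hG.2.1]
        have := Finset.card_le_card hG.2.1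
        omega
      rw [← this]
  rw [key]
  have step : ∀ G' ∈ E'.powerset,
      p ^ (A.card + G'.card) * (1-p) ^ (E.card - (A.card + G'.card))
      = (p ^ A.card * (1-p) ^ B.card) * (p ^ G'.card * (1-p) ^ (E'.card - G'.card)) := by
    intro G' hG'
    have hle : G'.card ≤ E'.card := Finset.card_le_card (Finset.mem_powerset.mp hG')
    have : E.card - (A.card + G'.card) = B.card + (E'.card - G'.card) := by omega
    rw [this, pow_add, pow_add]
    ring
  rw [Finset.sum_congr rfl step, ← Finset.mul_sum, sum_w, mul_one]

theorem restrict_general {α : Type*} [DecidableEq α] (E D Abs : Finset α) (p : ℝ)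
    (hD : D ⊆ E) (hAbs : Abs ⊆ E) (hdisj : Disjoint Abs D)
    (R : Finset α → Prop) [DecidablePred R] (hR : ∀ G ⊆ E, (R G ↔ R (G ∩ D))) :
    ∑ G ∈ E.powerset.filter (fun G => R G ∧ Disjoint Abs G),
      p ^ G.card * (1-p) ^ (E.card - G.card)
    = (1-p) ^ Abs.card *
      ∑ H ∈ D.powerset.filter R, p ^ H.card * (1-p) ^ ((D \ H).card) := by
  have hmap : ∀ G ∈ E.powerset.filter (fun G => R G ∧ Disjoint Abs G),
      G ∩ D ∈ D.powerset := by
    intro G _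
    exact Finset.mem_powerset.mpr Finset.inter_subset_right
  rw [← Finset.sum_fiberwise_of_maps_to hmap (fun G => p ^ G.card * (1-p) ^ (E.card - G.card))]
  have inner : ∀ H ∈ D.powerset,
      ∑ G ∈ (E.powerset.filter (fun G => R G ∧ Disjoint Abs G)).filter (fun G => G ∩ D = H),
        p ^ G.card * (1-p) ^ (E.card - G.card)
      = if R H then p ^ H.card * (1-p) ^ ((D \ H).card + Abs.card) else 0 := by
    intro H hH
    have hHD : H ⊆ D := Finset.mem_powerset.mp hH
    rw [Finset.filter_filter]
    by_cases hRH : R H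
    · rw [if_pos hRH]
      have hset : (E.powerset.filter (fun G => (R G ∧ Disjoint Abs G) ∧ G ∩ D = H))
          = E.powerset.filter (fun G => H ⊆ G ∧ Disjoint ((D \ H) ∪ Abs) G) := by
        apply Finset.filter_congr
        intro G hG
        have hGE : G ⊆ E := Finset.mem_powerset.mp hG
        constructor
        · rintro ⟨⟨hRG, hAG⟩, hGD⟩
          refine ⟨hGD ▸ Finset.inter_subset_left, ?_⟩
          rw [Finset.disjoint_union_left]
          refine ⟨?_, hAG⟩
          rw [Finset.disjoint_left]
          intro x hx hxG
          rw [Finset.mem_sdiff] at hx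
          exact hx.2 (hGD ▸ Finset.mem_inter.mpr ⟨hxG, hx.1⟩)
        · rintro ⟨hHG, hdisj2⟩
          rw [Finset.disjoint_union_left] at hdisj2
          have hGD : G ∩ D = H := by
            apply Finset.Subset.antisymm
            · intro x hx
              rw [Finset.mem_inter] at hx
              by_contra hxH
              exact (Finset.disjoint_right.mp hdisj2.1) hx.1 (Finset.mem_sdiff.mpr ⟨hx.2, hxH⟩)
            · exact Finset.subset_inter hHG hHD
          exact ⟨⟨(hR G hGE).mpr (hGD ▸ hRH), hdisj2.2⟩, hGD⟩
      have hd1 : Disjoint H ((D \ H) ∪ Abs) := by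
        rw [Finset.disjoint_union_right]
        exact ⟨Finset.disjoint_sdiff, (hdisj.mono_right hHD).symm⟩
      have hd2 : Disjoint (D \ H) Abs := (hdisj.mono_right Finset.sdiff_subset).symm
      rw [hset, cylinder E H ((D \ H) ∪ Abs) p (hHD.trans hD)
        (Finset.union_subset (Finset.sdiff_subset.trans hD) hAbs) hd1,
        Finset.card_union_of_disjoint hd2]
    · rw [if_neg hRH]
      apply Finset.sum_eq_zero
      intro G hG
      simp only [Finset.mem_filter, Finset.mem_powerset] at hG
      exact absurd (hG.2.2 ▸ (hR G hG.1).mp hG.2.1.1) hRH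
  rw [Finset.sum_congr rfl inner]
  rw [Finset.sum_ite, Finset.sum_const_zero, add_zero, Finset.mul_sum]
  apply Finset.sum_congr rfl
  intro H _
  rw [pow_add]
  ring


variable {n : ℕ}

def topSet (r : ℕ) (M : List (Fin n)) : Finset (Fin n) := (M.take (r-1)).toFinset

def qEdge (r : ℕ) (M : List (Fin n)) (v : Fin n) : Finset (Fin n) := insert v (topSet r M)

def queries (r : ℕ) (M : List (Fin n)) : Finset (Finset (Fin n)) :=
  (Finset.univ \ M.toFinset).image (qEdge r M)

def pick (G : Finset (Finset (Fin n))) (r : ℕ) (M : List (Fin n)) : Option (Fin n) :=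
  ((Finset.univ \ M.toFinset).filter (fun v => qEdge r M v ∈ G)).min

def gstep (G : Finset (Finset (Fin n))) (r : ℕ) (M : List (Fin n)) : List (Fin n) :=
  match pick G r M with
  | some v => v :: M
  | none => M

def initL (n r : ℕ) : List (Fin n) := (List.finRange n).take (r-1)

def iterL (G : Finset (Finset (Fin n))) (r : ℕ) (j : ℕ) : List (Fin n) :=
  (gstep G r)^[j] (initL n r)

-- basic lemmas
theorem pick_spec {G : Finset (Finset (Fin n))} {r : ℕ} {M : List (Fin n)} {v : Fin n}
    (h : pick G r M = some v) : v ∉ M ∧ qEdge r M v ∈ G := by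
  have hv := Finset.mem_of_min h
  simp only [Finset.mem_filter, Finset.mem_sdiff, Finset.mem_univ, true_and,
    List.mem_toFinset] at hv
  exact hv

theorem pick_none_disjoint {G : Finset (Finset (Fin n))} {r : ℕ} {M : List (Fin n)}
    (h : pick G r M = none) : Disjoint (queries r M) G := by
  rw [pick] at h
  have h' : ((Finset.univ \ M.toFinset).filter (fun v => qEdge r M v ∈ G)).min = ⊤ := h
  rw [Finset.min_eq_top] at h'
  rw [Finset.disjoint_left]
  rintro S hS hSG
  rw [queries, Finset.mem_image] at hS
  obtain ⟨v, hv, rfl⟩ := hS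
  have : v ∈ (Finset.univ \ M.toFinset).filter (fun v => qEdge r M v ∈ G) :=
    Finset.mem_filter.mpr ⟨hv, hSG⟩
  rw [h'] at this
  exact absurd this (Finset.notMem_empty v)

theorem pick_congr {G G' : Finset (Finset (Fin n))} {r : ℕ} {M : List (Fin n)}
    (h : ∀ S ∈ queries r M, (S ∈ G ↔ S ∈ G')) : pick G r M = pick G' r M := by
  unfold pick
  congr 1
  apply Finset.filter_congr
  intro v hv
  exact h _ (Finset.mem_image_of_mem _ hv)

theorem gstep_congr {G G' : Finset (Finset (Fin n))} {r : ℕ} {M : List (Fin n)}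
    (h : ∀ S ∈ queries r M, (S ∈ G ↔ S ∈ G')) : gstep G r M = gstep G' r M := by
  unfold gstep
  rw [pick_congr h]

theorem gstep_suffix (G : Finset (Finset (Fin n))) (r : ℕ) (M : List (Fin n)) :
    M <:+ gstep G r M := by
  unfold gstep
  match h : pick G r M with
  | some v => exact List.suffix_cons v M
  | none => exact List.suffix_refl M

theorem gstep_none {G : Finset (Finset (Fin n))} {r : ℕ} {M : List (Fin n)}
    (h : pick G r M = none) : gstep G r M = M := by
  unfold gstep; rw [h]

theorem gstep_some {G : Finset (Finset (Fin n))} {r : ℕ} {M : List (Fin n)} {v : Fin n}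
    (h : pick G r M = some v) : gstep G r M = v :: M := by
  unfold gstep; rw [h]

theorem gstep_nodup {G : Finset (Finset (Fin n))} {r : ℕ} {M : List (Fin n)}
    (h : M.Nodup) : (gstep G r M).Nodup := by
  match hp : pick G r M with
  | some v => rw [gstep_some hp]; exact List.nodup_cons.mpr ⟨(pick_spec hp).1, h⟩
  | none => rw [gstep_none hp]; exact h

theorem iterL_succ (G : Finset (Finset (Fin n))) (r j : ℕ) :
    iterL G r (j+1) = gstep G r (iterL G r j) := Function.iterate_succ_apply' _ _ _

theorem iterL_nodup (G : Finset (Finset (Fin n))) (r j : ℕ) : (iterL G r j).Nodup := by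
  induction j with
  | zero => exact (List.nodup_finRange n).sublist (List.take_sublist _ _)
  | succ j ih => rw [iterL_succ]; exact gstep_nodup ih

theorem iterL_suffix (G : Finset (Finset (Fin n))) (r : ℕ) {j k : ℕ} (h : j ≤ k) :
    iterL G r j <:+ iterL G r k := by
  induction k with
  | zero => simp_all
  | succ k ih =>
    rcases Nat.lt_or_ge j (k+1) with hlt | hge
    · exact (ih (by omega)).trans (by rw [iterL_succ]; exact gstep_suffix _ _ _)
    · have : j = k + 1 := by omega
      subst this; exact List.suffix_refl _

theorem iterL_stuck_stable {G : Finset (Finset (Fin n))} {r j : ℕ}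
    (h : pick G r (iterL G r j) = none) {k : ℕ} (hk : j ≤ k) :
    iterL G r k = iterL G r j := by
  induction k with
  | zero => have : j = 0 := by omega
            subst this; rfl
  | succ k ih =>
    rcases Nat.lt_or_ge j (k+1) with hlt | hge
    · have hk' := ih (by omega)
      rw [iterL_succ, hk', gstep_none h]
    · have : j = k + 1 := by omega
      subst this; rfl

theorem iterL_len_or_stuck (G : Finset (Finset (Fin n))) (r : ℕ) (j : ℕ) :
    (iterL G r j).length = (initL n r).length + j ∨ pick G r (iterL G r j) = none := by
  induction j with
  | zero => left; rfl
  | succ j ih =>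
    rcases ih with hlen | hstuck
    · match hp : pick G r (iterL G r j) with
      | some v =>
        left
        rw [iterL_succ, gstep_some hp, List.length_cons, hlen]
        omega
      | none =>
        right
        rw [iterL_succ, gstep_none hp]
        exact hp
    · right
      rw [iterL_succ, gstep_none hstuck]
      exact hstuck

theorem iterL_len_le (G : Finset (Finset (Fin n))) (r : ℕ) (j : ℕ) :
    (iterL G r j).length ≤ (initL n r).length + j := by
  induction j with
  | zero => exact le_refl _
  | succ j ih =>
    match hp : pick G r (iterL G r j) with
    | some v => rw [iterL_succ, gstep_some hp, List.length_cons]; omega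
    | none => rw [iterL_succ, gstep_none hp]; omega

theorem iterL_eq_of_len_le (G : Finset (Finset (Fin n))) (r : ℕ) {j k : ℕ} (hjk : j ≤ k)
    (hlen : (iterL G r k).length ≤ (initL n r).length + j) :
    iterL G r j = iterL G r k := by
  induction k with
  | zero => have : j = 0 := by omega
            subst this; rfl
  | succ k ih =>
    show iterL G r j = iterL G r (k+1)
    rcases Nat.lt_or_ge j (k+1) with hlt | hge
    · have hj : j ≤ k := by omega
      have hsuf : iterL G r k <:+ iterL G r (k+1) := iterL_suffix G r (Nat.le_succ k)
      have hlk := hsuf.length_le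
      have hlenk : (iterL G r k).length ≤ (initL n r).length + j := le_trans hlk hlen
      rcases iterL_len_or_stuck G r k with hl | hstuck
      · have hjeq : j = k := by omega
        subst hjeq
        exact hsuf.eq_of_length (by omega)
      · rw [ih hj hlenk, iterL_stuck_stable hstuck (Nat.le_succ k)]
    · have : j = k + 1 := by omega
      subst this; rfl

theorem topSet_subset (r : ℕ) (M : List (Fin n)) : topSet r M ⊆ M.toFinset := by
  intro x hx
  rw [topSet, List.mem_toFinset] at hx
  exact List.mem_toFinset.mpr ((M.take_sublist (r-1)).mem hx)

theorem topSet_card {r : ℕ} {M : List (Fin n)} (hnd : M.Nodup) (hlen : r - 1 ≤ M.length) :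
    (topSet r M).card = r - 1 := by
  rw [topSet, List.toFinset_card_of_nodup (hnd.sublist (M.take_sublist (r-1))),
    List.length_take]
  omega

theorem qEdge_mem_allEdges {r : ℕ} {M : List (Fin n)} {v : Fin n}
    (hnd : M.Nodup) (hlen : r - 1 ≤ M.length) (hr : 1 ≤ r) (hv : v ∉ M) :
    qEdge r M v ∈ allEdges n r := by
  rw [allEdges, Finset.mem_powersetCard]
  refine ⟨Finset.subset_univ _, ?_⟩
  rw [qEdge, Finset.card_insert_of_notMem
    (fun h => hv (List.mem_toFinset.mp (topSet_subset r M h))), topSet_card hnd hlen]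
  omega

theorem queries_subset_allEdges {r : ℕ} {M : List (Fin n)}
    (hnd : M.Nodup) (hlen : r - 1 ≤ M.length) (hr : 1 ≤ r) :
    queries r M ⊆ allEdges n r := by
  intro S hS
  rw [queries, Finset.mem_image] at hS
  obtain ⟨v, hv, rfl⟩ := hS
  simp only [Finset.mem_sdiff, Finset.mem_univ, true_and, List.mem_toFinset] at hv
  exact qEdge_mem_allEdges hnd hlen hr hv

theorem queries_card {r : ℕ} {M : List (Fin n)} (hnd : M.Nodup) :
    (queries r M).card = n - M.length := by
  rw [queries, Finset.card_image_of_injOn, Finset.card_sdiff_of_subset (Finset.subset_univ _),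
    Finset.card_univ, Fintype.card_fin, List.toFinset_card_of_nodup hnd]
  · intro u hu v hv h
    simp only [Finset.coe_sdiff, Set.mem_diff, Finset.mem_coe, List.mem_toFinset] at hu hv
    have hu' : u ∉ topSet r M := fun hmem => hu.2 (List.mem_toFinset.mp (topSet_subset r M hmem))
    have hv' : v ∉ topSet r M := fun hmem => hv.2 (List.mem_toFinset.mp (topSet_subset r M hmem))
    rw [qEdge, qEdge] at h
    have : u ∈ insert v (topSet r M) := h ▸ Finset.mem_insert_self u _
    rcases Finset.mem_insert.mp this with h1 | h1
    · exact h1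
    · exact absurd h1 hu'

theorem queries_disjoint_drop {r : ℕ} {L : List (Fin n)} (hr : 2 ≤ r)
    (hnd : L.Nodup) (hne : L ≠ []) {k : ℕ} (hk : 1 ≤ k) :
    Disjoint (queries r L) (queries r (L.drop k)) := by
  rw [Finset.disjoint_left]
  rintro S hS hS'
  rw [queries, Finset.mem_image] at hS hS'
  obtain ⟨v, hv, rfl⟩ := hS
  obtain ⟨u, hu, hequ⟩ := hS'
  simp only [Finset.mem_sdiff, Finset.mem_univ, true_and, List.mem_toFinset] at hv hu
  -- v = u
  have hvL : v ∉ L.toFinset := List.mem_toFinset.not.mpr hv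
  have hTk_sub : topSet r (L.drop k) ⊆ L.toFinset := by
    intro x hx
    have := topSet_subset r (L.drop k) hx
    rw [List.mem_toFinset] at this ⊢
    exact (L.drop_sublist k).mem this
  have hvu : v = u := by
    have hvmem : v ∈ insert u (topSet r (L.drop k)) := by
      rw [qEdge] at hequ
      rw [hequ]
      exact Finset.mem_insert_self v _
    rcases Finset.mem_insert.mp hvmem with h1 | h1
    · exact h1
    · exact absurd (hTk_sub h1) hvL
  subst hvu
  -- cancel v
  have hvT0 : v ∉ topSet r L := fun h => hvL (topSet_subset r L h)
  have hvTk : v ∉ topSet r (L.drop k) := fun h => hvL (hTk_sub h)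
  have hT : topSet r L = topSet r (L.drop k) := by
    have := congrArg (fun s => Finset.erase s v) hequ
    simpa [qEdge, Finset.erase_insert hvT0, Finset.erase_insert hvTk] using this.symm
  -- head argument
  obtain ⟨h, t, rfl⟩ : ∃ h t, L = h :: t := by
    cases L with
    | nil => exact absurd rfl hne
    | cons h t => exact ⟨h, t, rfl⟩
  have hht : h ∉ t := (List.nodup_cons.mp hnd).1
  have hhT0 : h ∈ topSet r (h :: t) := by
    rw [topSet]
    obtain ⟨m, hm⟩ : ∃ m, r - 1 = m + 1 := ⟨r - 2, by omega⟩
    rw [hm, List.take_succ_cons]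
    simp
  have hhTk : h ∈ topSet r ((h :: t).drop k) := hT ▸ hhT0
  have : h ∈ (h :: t).drop k := by
    have := topSet_subset r ((h::t).drop k) hhTk
    exact List.mem_toFinset.mp this
  obtain ⟨m, hm⟩ : ∃ m, k = m + 1 := ⟨k - 1, by omega⟩
  rw [hm, List.drop_succ_cons] at this
  exact hht ((t.drop_sublist m).mem this)

def Dset (r : ℕ) (L : List (Fin n)) (j0 : ℕ) : Finset (Finset (Fin n)) :=
  (Finset.Icc 1 j0).biUnion (fun k => queries r (L.drop k))

theorem iterL_det {G G' : Finset (Finset (Fin n))} {r j0 : ℕ} {L : List (Fin n)}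
    (hlen : L.length = (initL n r).length + j0)
    (hagree : ∀ k, 1 ≤ k → k ≤ j0 → ∀ S ∈ queries r (L.drop k), (S ∈ G ↔ S ∈ G'))
    (h : iterL G r j0 = L) : iterL G' r j0 = L := by
  have claim : ∀ j, j ≤ j0 → iterL G' r j = iterL G r j := by
    intro j
    induction j with
    | zero => intro _; rfl
    | succ j ih =>
      intro hj
      have hjlt : j < j0 := by omega
      have ihj := ih (by omega)
      -- length of iterL G r j is exactly initL + j
      have hlenj : (iterL G r j).length = (initL n r).length + j := by
        rcases iterL_len_or_stuck G r j with hl | hstuck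
        · exact hl
        · exfalso
          have hst := iterL_stuck_stable hstuck (le_of_lt hjlt)
          have hLj : iterL G r j = L := by rw [← h, hst]
          have h2 := iterL_len_le G r j
          have h3 := congrArg List.length hLj
          omega
      -- iterL G r j is the appropriate suffix of L
      have hsuf : iterL G r j <:+ L := h ▸ iterL_suffix G r (le_of_lt hjlt)
      obtain ⟨t, ht⟩ := hsuf
      have htlen : t.length = j0 - j := by
        have := congrArg List.length ht
        rw [List.length_append] at this
        omega
      have hMdrop : iterL G r j = L.drop (j0 - j) := by
        rw [← ht, ← htlen, List.drop_left]
      have hag : ∀ S ∈ queries r (iterL G r j), (S ∈ G ↔ S ∈ G') := by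
        rw [hMdrop]
        exact hagree (j0 - j) (by omega) (by omega)
      rw [iterL_succ, iterL_succ, ihj, gstep_congr (fun S hS => (hag S hS).symm)]
  rw [claim j0 (le_refl _), h]

theorem iterL_windows {G : Finset (Finset (Fin n))} {r : ℕ} (hr : 1 ≤ r) (j : ℕ)
    (k : ℕ) (hk : k + r ≤ (iterL G r j).length) :
    (((iterL G r j).drop k).take r).toFinset ∈ G := by
  induction j generalizing k with
  | zero =>
    exfalso
    have : (initL n r).length ≤ r - 1 := by
      rw [initL, List.length_take]
      omega
    have : (iterL G r 0).length ≤ r - 1 := this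
    omega
  | succ j ih =>
    rw [iterL_succ] at hk ⊢
    match hp : pick G r (iterL G r j) with
    | none =>
      rw [gstep_none hp] at hk ⊢
      exact ih k hk
    | some v =>
      rw [gstep_some hp] at hk ⊢
      match k with
      | 0 =>
        rw [List.drop_zero]
        have hq := (pick_spec hp).2
        rw [qEdge, topSet] at hq
        have htake : List.take r (v :: iterL G r j) = v :: List.take (r-1) (iterL G r j) := by
          obtain ⟨m, hm⟩ : ∃ m, r = m + 1 := ⟨r - 1, by omega⟩
          subst hm
          simp [List.take_succ_cons]
        rw [htake, List.toFinset_cons]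
        exact hq
      | (k'+1) =>
        rw [List.drop_succ_cons]
        apply ih k'
        rw [List.length_cons] at hk
        omega

theorem windows_reverse {G : Finset (Finset (Fin n))} {r : ℕ} {L : List (Fin n)}
    (hw : ∀ k, k + r ≤ L.length → ((L.drop k).take r).toFinset ∈ G)
    (i : ℕ) (hi : i + r ≤ L.reverse.length) :
    ((L.reverse.drop i).take r).toFinset ∈ G := by
  rw [List.length_reverse] at hi
  set ℓ := L.length with hℓ
  have h1 : L.reverse.drop i = (L.take (ℓ - i)).reverse := by
    rw [List.reverse_take]
    congr 1
    omega
  have h2 : (L.take (ℓ - i)).reverse.take r = ((L.take (ℓ - i)).drop ((ℓ - i) - r)).reverse := by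
    have := @List.reverse_take (Fin n) (L.take (ℓ - i)).reverse r
    rw [List.reverse_reverse, List.length_reverse, List.length_take] at this
    have hmin : min (ℓ - i) ℓ = ℓ - i := by omega
    rw [hmin] at this
    exact List.reverse_injective (by rw [this, List.reverse_reverse])
  rw [h1, h2, List.toFinset_reverse, List.drop_take]
  have : (ℓ - i) - ((ℓ - i) - r) = r := by omega
  rw [this]
  exact hw ((ℓ - i) - r) (by omega)

theorem initL_len (hn : r - 1 ≤ n) : (initL n r).length = r - 1 := by
  rw [initL, List.length_take, List.length_finRange]
  omega

theorem stucksum (n r : ℕ) (hr : 2 ≤ r) (hn : r - 1 ≤ n) (p : ℝ) (hp0 : 0 ≤ p) (hp1 : p ≤ 1)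
    (ℓ : ℕ) (hℓ1 : r - 1 ≤ ℓ) (hℓ2 : ℓ < n) :
    ∑ G ∈ (allEdges n r).powerset.filter (fun G => (iterL G r n).length = ℓ),
      p ^ G.card * (1-p) ^ ((allEdges n r).card - G.card) ≤ (1-p) ^ (n - ℓ) := by
  classical
  set E := allEdges n r with hE
  set w : Finset (Finset (Fin n)) → ℝ := fun G => p ^ G.card * (1-p) ^ (E.card - G.card) with hw
  have hwnn : ∀ G, 0 ≤ w G := fun G =>
    mul_nonneg (pow_nonneg hp0 _) (pow_nonneg (by linarith) _)
  set j0 := ℓ - (r - 1) with hj0def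
  have hinit : (initL n r).length = r - 1 := initL_len hn
  have hj0 : (initL n r).length + j0 = ℓ := by omega
  have hj0n : j0 ≤ n := by omega
  set s := E.powerset.filter (fun G => (iterL G r n).length = ℓ) with hs
  set t := s.image (fun G => iterL G r n) with ht
  have hmap : ∀ G ∈ s, iterL G r n ∈ t := fun G hG => Finset.mem_image_of_mem _ hG
  rw [← Finset.sum_fiberwise_of_maps_to hmap w]
  -- per-fiber analysis
  have key : ∀ L ∈ t,
      ∑ G ∈ s.filter (fun G => iterL G r n = L), w G
      ≤ (1-p) ^ (n - ℓ) *
        ∑ G ∈ E.powerset.filter (fun G => iterL G r j0 = L), w G := by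
    intro L hL
    obtain ⟨G₀, hG₀s, hG₀⟩ := Finset.mem_image.mp hL
    have hLnd : L.Nodup := hG₀ ▸ iterL_nodup G₀ r n
    have hLlen : L.length = ℓ := by
      rw [← hG₀]
      exact (Finset.mem_filter.mp hG₀s).2
    have hLne : L ≠ [] := by
      intro h
      rw [h] at hLlen
      simp at hLlen
      omega
    -- subset step
    have hsub : s.filter (fun G => iterL G r n = L)
        ⊆ E.powerset.filter (fun G => iterL G r j0 = L ∧ Disjoint (queries r L) G) := by
      intro G hG
      simp only [hs, Finset.mem_filter, Finset.mem_powerset] at hG ⊢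
      obtain ⟨⟨hGE, hlenG⟩, hGL⟩ := hG
      have h1 : iterL G r j0 = L := by
        rw [← hGL]
        exact iterL_eq_of_len_le G r hj0n (by omega)
      have hstuck : pick G r (iterL G r n) = none := by
        rcases iterL_len_or_stuck G r n with hl | hst
        · exfalso; omega
        · exact hst
      rw [hGL] at hstuck
      exact ⟨hGE, h1, pick_none_disjoint hstuck⟩
    refine le_trans (Finset.sum_le_sum_of_subset_of_nonneg hsub (fun G _ _ => hwnn G)) ?_
    -- apply restrict_general
    have hDsub : Dset r L j0 ⊆ E := by
      intro S hS
      rw [Dset, Finset.mem_biUnion] at hS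
      obtain ⟨k, hk, hSk⟩ := hS
      rw [Finset.mem_Icc] at hk
      refine queries_subset_allEdges (hLnd.sublist (L.drop_sublist k)) ?_ (by omega) hSk
      rw [List.length_drop]
      omega
    have hAbssub : queries r L ⊆ E := queries_subset_allEdges hLnd (by omega) (by omega)
    have hdisj : Disjoint (queries r L) (Dset r L j0) := by
      rw [Dset]
      rw [Finset.disjoint_biUnion_right]
      intro k hk
      rw [Finset.mem_Icc] at hk
      exact queries_disjoint_drop hr hLnd hLne hk.1
    have hR : ∀ G ⊆ E, ((iterL G r j0 = L) ↔ (iterL (G ∩ Dset r L j0) r j0 = L)) := by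
      intro G _
      have hagree : ∀ k, 1 ≤ k → k ≤ j0 → ∀ S ∈ queries r (L.drop k),
          (S ∈ G ↔ S ∈ G ∩ Dset r L j0) := by
        intro k hk1 hk2 S hS
        have hSD : S ∈ Dset r L j0 := by
          rw [Dset, Finset.mem_biUnion]
          exact ⟨k, Finset.mem_Icc.mpr ⟨hk1, hk2⟩, hS⟩
        constructor
        · intro h; exact Finset.mem_inter.mpr ⟨h, hSD⟩
        · intro h; exact (Finset.mem_inter.mp h).1
      constructor
      · exact iterL_det (by omega) hagree
      · exact iterL_det (by omega) (fun k h1 h2 S hS => (hagree k h1 h2 S hS).symm)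
    have hrg := restrict_general E (Dset r L j0) (queries r L) p hDsub hAbssub hdisj
      (fun G => iterL G r j0 = L) hR
    have hrg0 := restrict_general E (Dset r L j0) ∅ p hDsub (Finset.empty_subset E)
      (Finset.disjoint_left.mpr (fun a h => absurd h (Finset.notMem_empty a)))
      (fun G => iterL G r j0 = L) hR
    have hqcard : (queries r L).card = n - ℓ := by
      rw [queries_card hLnd, hLlen]
    rw [Finset.card_empty, pow_zero, one_mul] at hrg0
    refine le_of_eq (hrg.trans ?_)
    rw [hqcard, ← hrg0]
    congr 1
    refine Finset.sum_congr ?_ (fun _ _ => rfl)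
    apply Finset.filter_congr
    intro G _
    simp
  refine le_trans (Finset.sum_le_sum key) ?_
  rw [← Finset.mul_sum]
  have hfinal : ∑ L ∈ t, ∑ G ∈ E.powerset.filter (fun G => iterL G r j0 = L), w G ≤ 1 := by
    set s2 := E.powerset.filter (fun G => iterL G r j0 ∈ t) with hs2
    have hmap2 : ∀ G ∈ s2, iterL G r j0 ∈ t := by
      intro G hG
      exact (Finset.mem_filter.mp hG).2
    have heq : ∀ L ∈ t, s2.filter (fun G => iterL G r j0 = L)
        = E.powerset.filter (fun G => iterL G r j0 = L) := by
      intro L hL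
      rw [hs2, Finset.filter_filter]
      apply Finset.filter_congr
      intro G _
      constructor
      · rintro ⟨_, h⟩; exact h
      · intro h; exact ⟨h ▸ hL, h⟩
    calc ∑ L ∈ t, ∑ G ∈ E.powerset.filter (fun G => iterL G r j0 = L), w G
        = ∑ L ∈ t, ∑ G ∈ s2.filter (fun G => iterL G r j0 = L), w G := by
          refine Finset.sum_congr rfl fun L hL => ?_
          rw [heq L hL]
      _ = ∑ G ∈ s2, w G := Finset.sum_fiberwise_of_maps_to hmap2 w
      _ ≤ ∑ G ∈ E.powerset, w G :=
          Finset.sum_le_sum_of_subset_of_nonneg (Finset.filter_subset _ _) (fun G _ _ => hwnn G)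
      _ = 1 := sum_w E p
  calc (1-p) ^ (n - ℓ) * ∑ L ∈ t, ∑ G ∈ E.powerset.filter (fun G => iterL G r j0 = L), w G
      ≤ (1-p) ^ (n - ℓ) * 1 := by
        apply mul_le_mul_of_nonneg_left hfinal (pow_nonneg (by linarith) _)
    _ = (1-p) ^ (n - ℓ) := mul_one _

theorem bad_bound (n r : ℕ) (hr : 2 ≤ r) (hn : r - 1 ≤ n) (p : ℝ) (hp0 : 0 ≤ p) (hp1 : p ≤ 1)
    (m : ℕ) (hm : m ≤ n) :
    ∑ G ∈ (allEdges n r).powerset.filter (fun G => (iterL G r n).length < n - m),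
      p ^ G.card * (1-p) ^ ((allEdges n r).card - G.card) ≤ n * (1-p) ^ m := by
  classical
  set E := allEdges n r with hE
  set w : Finset (Finset (Fin n)) → ℝ := fun G => p ^ G.card * (1-p) ^ (E.card - G.card) with hw
  have hwnn : ∀ G, 0 ≤ w G := fun G =>
    mul_nonneg (pow_nonneg hp0 _) (pow_nonneg (by linarith) _)
  set s := E.powerset.filter (fun G => (iterL G r n).length < n - m) with hs
  have hmap : ∀ G ∈ s, (iterL G r n).length ∈ Finset.Ico (r-1) (n - m) := by
    intro G hG
    rw [hs, Finset.mem_filter] at hG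
    rw [Finset.mem_Ico]
    refine ⟨?_, hG.2⟩
    have hsuf := iterL_suffix G r (Nat.zero_le n)
    have := hsuf.length_le
    have h0 : (iterL G r 0).length = r - 1 := initL_len hn
    omega
  rw [← Finset.sum_fiberwise_of_maps_to hmap w]
  have key : ∀ ℓ ∈ Finset.Ico (r-1) (n-m),
      ∑ G ∈ s.filter (fun G => (iterL G r n).length = ℓ), w G ≤ (1-p) ^ m := by
    intro ℓ hℓ
    rw [Finset.mem_Ico] at hℓ
    have hsub : s.filter (fun G => (iterL G r n).length = ℓ)
        ⊆ E.powerset.filter (fun G => (iterL G r n).length = ℓ) := by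
      intro G hG
      rw [Finset.mem_filter] at hG ⊢
      rw [hs, Finset.mem_filter] at hG
      exact ⟨hG.1.1, hG.2⟩
    refine le_trans (Finset.sum_le_sum_of_subset_of_nonneg hsub (fun G _ _ => hwnn G)) ?_
    refine le_trans (stucksum n r hr hn p hp0 hp1 ℓ hℓ.1 (by omega)) ?_
    exact pow_le_pow_of_le_one (by linarith) (by linarith) (by omega)
  refine le_trans (Finset.sum_le_sum key) ?_
  rw [Finset.sum_const, nsmul_eq_mul]
  apply mul_le_mul_of_nonneg_right _ (pow_nonneg (by linarith) _)
  rw [Nat.card_Ico]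
  have : (n - m) - (r - 1) ≤ n := by omega
  exact_mod_cast this


theorem probHyp_le_one (n r : ℕ) (p : ℝ) (hp0 : 0 ≤ p) (hp1 : p ≤ 1)
    (P : Finset (Finset (Fin n)) → Prop) : probHyp n r p P ≤ 1 := by
  have h1 : probHyp n r p P
      ≤ ∑ G ∈ (allEdges n r).powerset, p ^ G.card * (1-p) ^ ((allEdges n r).card - G.card) := by
    rw [probHyp]
    apply Finset.sum_le_sum
    intro G hG
    have hwnn : 0 ≤ p ^ G.card * (1-p) ^ ((allEdges n r).card - G.card) :=
      mul_nonneg (pow_nonneg hp0 _) (pow_nonneg (by linarith) _)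
    by_cases h : P G
    · rw [if_pos h]
    · rw [if_neg h]
      exact hwnn
  rw [sum_w (allEdges n r) p] at h1
  exact h1

theorem lower_bound (r : ℕ) (hr : 3 ≤ r) (ε : ℝ) (hε0 : 0 < ε) (hε1 : ε < 1)
    (n : ℕ) (hn : r ≤ n) :
    1 - (n:ℝ) * Real.exp (1 - (n:ℝ) ^ (ε/2)) ≤
      probHyp n r ((n : ℝ) ^ (-1 + ε)) (fun G =>
        ∃ P : List (Fin n), IsTightPath r G P ∧
          (n : ℝ) - (n : ℝ) ^ (1 - ε / 2) ≤ (P.length : ℝ)) := by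
  classical
  have hn1 : 1 ≤ n := by omega
  have hn1R : (1:ℝ) ≤ (n:ℝ) := by exact_mod_cast hn1
  have hn0R : (0:ℝ) < (n:ℝ) := by linarith
  set p : ℝ := (n:ℝ) ^ (-1 + ε) with hpdef
  have hp0 : 0 ≤ p := Real.rpow_nonneg (by positivity) _
  have hp1 : p ≤ 1 := Real.rpow_le_one_of_one_le_of_nonpos hn1R (by linarith)
  set x : ℝ := (n:ℝ) ^ (1 - ε/2) with hxdef
  have hx0 : 0 ≤ x := Real.rpow_nonneg (by positivity) _
  set m : ℕ := ⌊x⌋₊ with hmdef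
  have hxn : x ≤ (n:ℝ) := by
    calc x ≤ (n:ℝ) ^ (1:ℝ) := Real.rpow_le_rpow_of_exponent_le hn1R (by linarith)
      _ = (n:ℝ) := Real.rpow_one _
  have hmx : (m:ℝ) ≤ x := Nat.floor_le hx0
  have hmn : m ≤ n := by
    have : (m:ℝ) ≤ (n:ℝ) := le_trans hmx hxn
    exact_mod_cast this
  set E := allEdges n r with hE
  set w : Finset (Finset (Fin n)) → ℝ := fun G => p ^ G.card * (1-p) ^ (E.card - G.card) with hw
  have hwnn : ∀ G, 0 ≤ w G := fun G =>
    mul_nonneg (pow_nonneg hp0 _) (pow_nonneg (by linarith) _)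
  set P : Finset (Finset (Fin n)) → Prop := fun G =>
    ∃ Q : List (Fin n), IsTightPath r G Q ∧ (n : ℝ) - (n : ℝ) ^ (1 - ε / 2) ≤ (Q.length : ℝ) with hP
  have hPsum : probHyp n r p P = ∑ G ∈ E.powerset.filter P, w G := (Finset.sum_filter P w).symm
  have htot : ∑ G ∈ E.powerset.filter P, w G
      + ∑ G ∈ E.powerset.filter (fun G => ¬ P G), w G = 1 := by
    rw [Finset.sum_filter_add_sum_filter_not]
    exact sum_w E p
  -- every G with a long greedy path satisfies P
  have himp : ∀ G, n - m ≤ (iterL G r n).length → P G := by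
    intro G hlen
    refine ⟨(iterL G r n).reverse, ⟨List.nodup_reverse.mpr (iterL_nodup G r n), fun i hi =>
      windows_reverse (fun k hk => iterL_windows (by omega) n k hk) i hi⟩, ?_⟩
    rw [List.length_reverse]
    have h1 : ((n - m : ℕ):ℝ) ≤ ((iterL G r n).length : ℝ) := Nat.cast_le.mpr hlen
    have h2 : (n:ℝ) - x ≤ ((n - m : ℕ):ℝ) := by
      rw [Nat.cast_sub hmn]
      linarith
    rw [← hxdef]
    linarith
  have hsubset : E.powerset.filter (fun G => ¬ P G)
      ⊆ E.powerset.filter (fun G => (iterL G r n).length < n - m) := by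
    intro G hG
    rw [Finset.mem_filter] at hG ⊢
    refine ⟨hG.1, ?_⟩
    by_contra h
    push_neg at h
    exact hG.2 (himp G h)
  have hbad := bad_bound n r (by omega) (by omega) p hp0 hp1 m hmn
  have hnotP : ∑ G ∈ E.powerset.filter (fun G => ¬ P G), w G ≤ (n:ℝ) * (1-p) ^ m :=
    le_trans (Finset.sum_le_sum_of_subset_of_nonneg hsubset (fun G _ _ => hwnn G)) hbad
  -- analytic bound : (1-p)^m ≤ exp (1 - n^(ε/2))
  have hxp : x * p = (n:ℝ) ^ (ε/2) := by
    rw [hxdef, hpdef, ← Real.rpow_add hn0R]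
    congr 1
    ring
  have hmlb : x - 1 ≤ (m:ℝ) := by
    have := Nat.lt_floor_add_one x
    rw [← hmdef] at this
    linarith
  have hmp : (n:ℝ) ^ (ε/2) - 1 ≤ (m:ℝ) * p := by
    have h1 : (x - 1) * p ≤ (m:ℝ) * p := mul_le_mul_of_nonneg_right hmlb hp0
    have h2 : (x - 1) * p = x * p - p := by ring
    rw [h2, hxp] at h1
    linarith
  have hexp : (1-p) ^ m ≤ Real.exp (1 - (n:ℝ) ^ (ε/2)) := by
    have h1 : (1-p) ^ m ≤ Real.exp (-p) ^ m := by
      apply pow_le_pow_left₀ (by linarith)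
      have := Real.add_one_le_exp (-p)
      linarith
    have h2 : Real.exp (-p) ^ m = Real.exp ((m:ℝ) * (-p)) := (Real.exp_nat_mul _ m).symm
    have h3 : Real.exp ((m:ℝ) * (-p)) ≤ Real.exp (1 - (n:ℝ) ^ (ε/2)) := by
      apply Real.exp_le_exp.mpr
      have : (m:ℝ) * (-p) = -((m:ℝ) * p) := by ring
      rw [this]
      linarith
    calc (1-p) ^ m ≤ Real.exp (-p) ^ m := h1
      _ = Real.exp ((m:ℝ) * (-p)) := h2
      _ ≤ Real.exp (1 - (n:ℝ) ^ (ε/2)) := h3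
  have hfinal : (n:ℝ) * (1-p) ^ m ≤ (n:ℝ) * Real.exp (1 - (n:ℝ) ^ (ε/2)) :=
    mul_le_mul_of_nonneg_left hexp (by positivity)
  rw [hPsum]
  linarith
/-- For every `r ≥ 3` and `0 < ε < 1`: a.a.s. the random `r`-uniform hypergraph
`G^(r)(n, n^(-1+ε))` contains a tight path on at least `n - n^(1-ε/2)` vertices. -/
theorem almost_spanning_tight_path (r : ℕ) (hr : 3 ≤ r) (ε : ℝ)
    (hε0 : 0 < ε) (hε1 : ε < 1) :
    Filter.Tendsto
      (fun n => probHyp n r ((n : ℝ) ^ (-1 + ε)) (fun G =>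
        ∃ P : List (Fin n), IsTightPath r G P ∧
          (n : ℝ) - (n : ℝ) ^ (1 - ε / 2) ≤ (P.length : ℝ)))
      Filter.atTop (nhds 1) := by
  classical
  have hc0 : Filter.Tendsto (fun n : ℕ => (n:ℝ) * Real.exp (1 - (n:ℝ) ^ (ε/2)))
      Filter.atTop (nhds 0) := by
    have hb : Filter.Tendsto (fun x : ℝ => x ^ (2/ε) * Real.exp (-1 * x))
        Filter.atTop (nhds 0) :=
      tendsto_rpow_mul_exp_neg_mul_atTop_nhds_zero (2/ε) 1 one_pos
    have hu : Filter.Tendsto (fun n : ℕ => (n:ℝ) ^ (ε/2)) Filter.atTop Filter.atTop :=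
      (tendsto_rpow_atTop (by positivity)).comp tendsto_natCast_atTop_atTop
    have hcomp := hb.comp hu
    have hmul := hcomp.const_mul (Real.exp 1)
    rw [mul_zero] at hmul
    refine hmul.congr' ?_
    filter_upwards [Filter.eventually_ge_atTop 1] with n hn
    have hn0 : (0:ℝ) ≤ (n:ℝ) := Nat.cast_nonneg n
    have hid : ((n:ℝ) ^ (ε/2)) ^ (2/ε) = (n:ℝ) := by
      have h1 : ((n:ℝ) ^ (ε/2)) ^ (2/ε) = (n:ℝ) ^ ((ε/2) * (2/ε)) :=
        (Real.rpow_mul hn0 _ _).symm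
      have h2 : (ε/2) * (2/ε) = 1 := by field_simp
      rw [h1, h2, Real.rpow_one]
    show Real.exp 1 * (((n:ℝ) ^ (ε/2)) ^ (2/ε) * Real.exp (-1 * (n:ℝ) ^ (ε/2)))
        = (n:ℝ) * Real.exp (1 - (n:ℝ) ^ (ε/2))
    rw [hid, show (1:ℝ) - (n:ℝ) ^ (ε/2) = 1 + (-1 * (n:ℝ) ^ (ε/2)) by ring, Real.exp_add]
    ring
  refine tendsto_of_tendsto_of_tendsto_of_le_of_le'
    (g := fun n : ℕ => 1 - (n:ℝ) * Real.exp (1 - (n:ℝ) ^ (ε/2))) ?_ tendsto_const_nhds ?_ ?_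
  · have h := hc0.const_sub 1
    rw [sub_zero] at h
    exact h
  · filter_upwards [Filter.eventually_ge_atTop r] with n hn
    exact lower_bound r hr ε hε0 hε1 n hn
  · filter_upwards [Filter.eventually_ge_atTop 1] with n hn
    have hn1R : (1:ℝ) ≤ (n:ℝ) := by exact_mod_cast hn
    exact probHyp_le_one n r ((n:ℝ) ^ (-1 + ε)) (Real.rpow_nonneg (Nat.cast_nonneg n) _)
      (Real.rpow_le_one_of_one_le_of_nonpos hn1R (by linarith)) _
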